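/- arXiv:1705.08825 — 3 statements merged into one kernel-verified Lean document; each statement's English description precedes it below -/
import Mathlib

section
/- If p ⪯ q (p is majorized by q), then there exists a doubly stochastic matrix D such that p = D q. -/
open Finset Kronecker ComplexOrder

/-- Non-increasing rearrangement of `p`. -/
noncomputable def sortDesc {n : ℕ} (p : Fin n → ℝ) : Fin n → ℝ :=
  fun i => p (Tuple.sort p i.rev)

/-- Sum of the `k` largest entries of `p`. -/
noncomputable def partialSum {n : ℕ} (p : Fin n → ℝ) (k : ℕ) : ℝ :=
  ∑ i ∈ Finset.univ.filter (fun i : Fin n => (i : ℕ) < k), sortDesc p i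

/-- `p ⪯ q`: `p` is majorized by `q`. -/
noncomputable def MajorizedBy {n : ℕ} (p q : Fin n → ℝ) : Prop :=
  (∀ k : ℕ, partialSum p k ≤ partialSum q k) ∧ (∑ i, p i = ∑ i, q i)

def IsProbVec {n : ℕ} (p : Fin n → ℝ) : Prop :=
  (∀ i, 0 ≤ p i) ∧ ∑ i, p i = 1

/-- Tensor (Kronecker) product of vectors. -/
def tensorVec {d e : ℕ} (p : Fin d → ℝ) (q : Fin e → ℝ) : Fin (d * e) → ℝ :=
  fun k => p (finProdFinEquiv.symm k).1 * q (finProdFinEquiv.symm k).2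

/-- Pad a vector with trailing zeros. -/
def padVec {d m : ℕ} (p : Fin d → ℝ) : Fin m → ℝ :=
  fun i => if h : (i : ℕ) < d then p ⟨i, h⟩ else 0

def DoublyStochastic {ι : Type*} [Fintype ι] (M : Matrix ι ι ℝ) : Prop :=
  (∀ i j, 0 ≤ M i j) ∧ (∀ i, ∑ j, M i j = 1) ∧ (∀ j, ∑ i, M i j = 1)

def IsDensityMatrix {ι : Type*} [Fintype ι] [DecidableEq ι] (ρ : Matrix ι ι ℂ) : Prop :=
  ρ.PosSemidef ∧ ρ.trace = 1

def IsPOVM {ι : Type*} [Fintype ι] [DecidableEq ι] {d : ℕ} (F : Fin d → Matrix ι ι ℂ) : Prop :=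
  (∀ a, (F a).PosSemidef) ∧ ∑ a, F a = 1

/-- Outcome distribution of POVM `F` on state `ρ`. -/
noncomputable def outDist {ι : Type*} [Fintype ι] [DecidableEq ι] {d : ℕ}
    (F : Fin d → Matrix ι ι ℂ) (ρ : Matrix ι ι ℂ) : Fin d → ℝ :=
  fun a => (Matrix.trace (F a * ρ)).re


noncomputable def Tmat {d : ℕ} (σ : Equiv.Perm (Fin d)) (l : ℝ) : Matrix (Fin d) (Fin d) ℝ :=
  fun a b => (1 - l) * (if a = b then 1 else 0) + l * (if σ a = b then 1 else 0)

lemma ds_T {d : ℕ} (σ : Equiv.Perm (Fin d)) {l : ℝ} (h0 : 0 ≤ l) (h1 : l ≤ 1) :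
    DoublyStochastic (Tmat σ l) := by
  refine ⟨fun a b => ?_, fun a => ?_, fun b => ?_⟩
  · have : (0:ℝ) ≤ 1 - l := by linarith
    unfold Tmat
    positivity
  · unfold Tmat
    rw [Finset.sum_add_distrib, ← Finset.mul_sum, ← Finset.mul_sum,
      Finset.sum_ite_eq univ a (fun _ => (1:ℝ)), Finset.sum_ite_eq univ (σ a) (fun _ => (1:ℝ))]
    simp
  · unfold Tmat
    have h2 : ∀ a : Fin d, (σ a = b) = (a = σ.symm b) := by
      intro a; simp [Equiv.eq_symm_apply]
    simp only [h2]
    rw [Finset.sum_add_distrib, ← Finset.mul_sum, ← Finset.mul_sum,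
      Finset.sum_ite_eq' univ b (fun _ => (1:ℝ)), Finset.sum_ite_eq' univ (σ.symm b) (fun _ => (1:ℝ))]
    simp

lemma T_mulVec {d : ℕ} (σ : Equiv.Perm (Fin d)) (l : ℝ) (v : Fin d → ℝ) :
    (Tmat σ l).mulVec v = fun a => (1 - l) * v a + l * v (σ a) := by
  funext a
  unfold Tmat Matrix.mulVec dotProduct
  simp only [add_mul, Finset.sum_add_distrib, ite_mul, one_mul, zero_mul, mul_ite, mul_zero]
  rw [Finset.sum_ite_eq univ a (fun x => (1-l)*1*v x), Finset.sum_ite_eq univ (σ a) (fun x => l*1*v x)]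
  simp

lemma ds_mul {ι : Type*} [Fintype ι] {A B : Matrix ι ι ℝ}
    (hA : DoublyStochastic A) (hB : DoublyStochastic B) : DoublyStochastic (A * B) := by
  refine ⟨fun i j => ?_, fun i => ?_, fun j => ?_⟩
  · exact Finset.sum_nonneg fun k _ => mul_nonneg (hA.1 i k) (hB.1 k j)
  · simp only [Matrix.mul_apply]
    rw [Finset.sum_comm]
    calc ∑ k, ∑ j, A i k * B k j = ∑ k, A i k * ∑ j, B k j := by
          simp [Finset.mul_sum]
      _ = 1 := by simp [hB.2.1, hA.2.1 i]
  · simp only [Matrix.mul_apply]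
    calc ∑ i, ∑ k, A i k * B k j = ∑ k, (∑ i, A i k) * B k j := by
          rw [Finset.sum_comm]; simp [Finset.sum_mul]
      _ = 1 := by simp [hA.2.2, hB.2.2 j]

lemma ds_one'
 {ι : Type*} [Fintype ι] [DecidableEq ι] :
    DoublyStochastic (1 : Matrix ι ι ℝ) := by
  refine ⟨fun i j => ?_, fun i => ?_, fun j => ?_⟩
  · rw [Matrix.one_apply]; positivity
  · simp [Matrix.one_apply]
  · simp [Matrix.one_apply]

lemma key {d : ℕ} : ∀ (N : ℕ) (x y : Fin d → ℝ), Antitone x → Antitone y →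
    (∀ m : ℕ, (∑ i ∈ univ.filter (fun i : Fin d => (i:ℕ) < m), x i) ≤
      ∑ i ∈ univ.filter (fun i : Fin d => (i:ℕ) < m), y i) →
    (∑ i, x i = ∑ i, y i) →
    ((univ.filter (fun i => x i ≠ y i)).card ≤ N) →
    ∃ D : Matrix (Fin d) (Fin d) ℝ, DoublyStochastic D ∧ x = D.mulVec y := by
  intro N
  induction N with
  | zero =>
    intro x y _ _ _ _ hcard
    have hxy : x = y := by
      funext i
      by_contra hne
      have : i ∈ univ.filter (fun i => x i ≠ y i) := by simp [hne]
      have := Finset.card_pos.mpr ⟨i, this⟩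
      omega
    exact ⟨1, ds_one', by rw [hxy, Matrix.one_mulVec]⟩
  | succ N ih =>
    intro x y hx hy hps hsum hcard
    by_cases hxy : x = y
    · exact ⟨1, ds_one', by rw [hxy, Matrix.one_mulVec]⟩
    have hA : (univ.filter fun i => x i < y i).Nonempty := by
      by_contra hA
      rw [Finset.not_nonempty_iff_eq_empty, Finset.filter_eq_empty_iff] at hA
      apply hxy
      funext i
      have hle : ∀ i : Fin d, y i ≤ x i := fun i => not_lt.mp (hA (mem_univ i))
      by_contra hne
      have : ∑ i, y i < ∑ i, x i :=
        Finset.sum_lt_sum (fun i _ => hle i) ⟨i, mem_univ i, lt_of_le_of_ne (hle i) (Ne.symm hne)⟩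
      linarith
    set j := (univ.filter fun i => x i < y i).max' hA with hjdef
    have hjmem := Finset.max'_mem _ hA
    rw [← hjdef] at hjmem
    have hxj : x j < y j := (mem_filter.mp hjmem).2
    have hjmax : ∀ i, j < i → ¬ (x i < y i) := fun i hi h =>
      absurd (Finset.le_max' _ i (mem_filter.mpr ⟨mem_univ _, h⟩)) (not_le.mpr hi)
    have hsplitj : univ.filter (fun i : Fin d => (i:ℕ) < (j:ℕ)+1)
        = insert j (univ.filter fun i : Fin d => (i:ℕ) < (j:ℕ)) := by
      ext i
      simp only [mem_insert, mem_filter, mem_univ, true_and, Fin.ext_iff]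
      omega
    have hgap : (y j - x j) ≤ (∑ i ∈ univ.filter (fun i : Fin d => (i:ℕ) < (j:ℕ)+1), y i)
        - ∑ i ∈ univ.filter (fun i : Fin d => (i:ℕ) < (j:ℕ)+1), x i := by
      rw [hsplitj, Finset.sum_insert (by simp), Finset.sum_insert (by simp)]
      have := hps (j:ℕ)
      linarith
    have hB : (univ.filter fun i => j < i ∧ y i < x i).Nonempty := by
      by_contra hB
      rw [Finset.not_nonempty_iff_eq_empty, Finset.filter_eq_empty_iff] at hB
      have heq : ∀ i, j < i → x i = y i := by
        intro i hi
        have h1 : ¬ (y i < x i) := fun h => hB (mem_univ i) ⟨hi, h⟩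
        exact le_antisymm (not_lt.mp h1) (not_lt.mp (hjmax i hi))
      have hsplit := Finset.sum_filter_add_sum_filter_not univ
        (fun i : Fin d => (i:ℕ) < (j:ℕ)+1) (fun i => y i - x i)
      have h2 : ∑ i ∈ univ.filter (fun i : Fin d => ¬((i:ℕ) < (j:ℕ)+1)), (y i - x i) = 0 := by
        apply Finset.sum_eq_zero
        intro i hi
        simp only [mem_filter, mem_univ, true_and, not_lt] at hi
        have : j < i := by rw [Fin.lt_def]; omega
        rw [heq i this]; ring
      have h3 : ∑ i, (y i - x i) = 0 := by rw [Finset.sum_sub_distrib]; linarith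
      simp only [Finset.sum_sub_distrib] at hsplit h2 h3
      linarith
    set k := (univ.filter fun i => j < i ∧ y i < x i).min' hB with hkdef
    have hkmem := Finset.min'_mem _ hB
    rw [← hkdef] at hkmem
    have hjk : j < k := (mem_filter.mp hkmem).2.1
    have hyk : y k < x k := (mem_filter.mp hkmem).2.2
    have hkmin : ∀ i, j < i → y i < x i → k ≤ i := fun i h1 h2 =>
      Finset.min'_le _ i (mem_filter.mpr ⟨mem_univ _, h1, h2⟩)
    have hmid : ∀ i, j < i → i < k → x i = y i := by
      intro i h1 h2
      have hnb : ¬ (y i < x i) := fun h => absurd (hkmin i h1 h) (not_le.mpr h2)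
      exact le_antisymm (not_lt.mp hnb) (not_lt.mp (hjmax i h1))
    set δ := min (y j - x j) (x k - y k) with hδdef
    have hδ : 0 < δ := lt_min (by linarith) (by linarith)
    have hδ1 : δ ≤ y j - x j := min_le_left _ _
    have hδ2 : δ ≤ x k - y k := min_le_right _ _
    have hxjk : x k ≤ x j := hx hjk.le
    have hyjk : y k < y j := by linarith
    have hjkne : j ≠ k := ne_of_lt hjk
    set y' : Fin d → ℝ :=
      fun i => y i + (if i = j then -δ else 0) + (if i = k then δ else 0) with hy'def
    have hy'j : y' j = y j - δ := by simp [hy'def, hjkne]; ring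
    have hy'k : y' k = y k + δ := by simp [hy'def, Ne.symm hjkne]
    have hy'o : ∀ i, i ≠ j → i ≠ k → y' i = y i := by
      intro i h1 h2; simp [hy'def, h1, h2]
    have hb1 : x j ≤ y' j := by rw [hy'j]; linarith
    have hb2 : y' j ≤ y j := by rw [hy'j]; linarith
    have hb3 : y k ≤ y' k := by rw [hy'k]; linarith
    have hb4 : y' k ≤ x k := by rw [hy'k]; linarith
    have hy' : Antitone y' := by
      intro a b hab
      rcases eq_or_lt_of_le hab with rfl | hab
      · exact le_refl _
      by_cases haj : a = j
      · rw [haj] at hab ⊢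
        by_cases hbk : b = k
        · rw [hbk]; linarith
        · have hbj : b ≠ j := (ne_of_gt hab)
          rw [hy'o b hbj hbk]
          by_cases hbk2 : b < k
          · have h1 := hmid b hab hbk2
            have h2 : x b ≤ x j := hx hab.le
            linarith
          · have hkb : k < b := lt_of_le_of_ne (not_lt.mp hbk2) (Ne.symm hbk)
            have := hy hkb.le
            linarith
      · by_cases hak : a = k
        · rw [hak] at hab ⊢
          have hbk : b ≠ k := ne_of_gt hab
          have hbj : b ≠ j := fun h => absurd (h ▸ hab) (not_lt.mpr (hjk.le))
          rw [hy'o b hbj hbk]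
          have := hy hab.le
          linarith
        · by_cases hbj : b = j
          · rw [hbj] at hab ⊢
            have hak2 : a ≠ k := fun h => absurd (h ▸ hab) (not_lt.mpr hjk.le)
            rw [hy'o a haj hak2]
            have := hy hab.le
            linarith
          · by_cases hbk : b = k
            · rw [hbk] at hab ⊢
              have hak2 : a ≠ k := ne_of_lt hab
              rw [hy'o a haj hak2]
              by_cases haj2 : a < j
              · have := hy haj2.le
                linarith
              · have hja : j < a := lt_of_le_of_ne (not_lt.mp haj2) (Ne.symm haj)
                have h1 := hmid a hja hab
                have h2 : x k ≤ x a := hx hab.le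
                linarith
            · rw [hy'o a haj hak, hy'o b hbj hbk]
              exact hy hab.le
    have hshift : ∀ m : ℕ, (∑ i ∈ univ.filter (fun i : Fin d => (i:ℕ) < m), y' i)
        = (∑ i ∈ univ.filter (fun i : Fin d => (i:ℕ) < m), y i)
          + (if (j:ℕ) < m then -δ else 0) + (if (k:ℕ) < m then δ else 0) := by
      intro m
      simp only [hy'def]
      rw [Finset.sum_add_distrib, Finset.sum_add_distrib,
        Finset.sum_ite_eq' (univ.filter (fun i : Fin d => (i:ℕ) < m)) j (fun _ => -δ),
        Finset.sum_ite_eq' (univ.filter (fun i : Fin d => (i:ℕ) < m)) k (fun _ => δ)]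
      simp [mem_filter]
    have hps' : ∀ m : ℕ, (∑ i ∈ univ.filter (fun i : Fin d => (i:ℕ) < m), x i) ≤
        ∑ i ∈ univ.filter (fun i : Fin d => (i:ℕ) < m), y' i := by
      intro m
      rw [hshift m]
      by_cases hm1 : m ≤ (j:ℕ)
      · have hk1 : ¬ ((k:ℕ) < m) := by
          have := hjk
          rw [Fin.lt_def] at this
          omega
        rw [if_neg (by omega), if_neg hk1]
        simpa using hps m
      · push_neg at hm1
        by_cases hm2 : (k:ℕ) < m
        · rw [if_pos hm1, if_pos hm2]
          have := hps m
          linarith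
        · rw [if_pos hm1, if_neg hm2]
          -- need: δ ≤ ∑ y - ∑ x over filter (< m)
          have hsplit := Finset.sum_filter_add_sum_filter_not
            (univ.filter (fun i : Fin d => (i:ℕ) < m))
            (fun i : Fin d => (i:ℕ) < (j:ℕ)+1) (fun i => y i - x i)
          have he1 : (univ.filter (fun i : Fin d => (i:ℕ) < m)).filter
              (fun i : Fin d => (i:ℕ) < (j:ℕ)+1)
              = univ.filter (fun i : Fin d => (i:ℕ) < (j:ℕ)+1) := by
            ext i
            simp only [mem_filter, mem_univ, true_and]
            omega
          have he2 : ∑ i ∈ (univ.filter (fun i : Fin d => (i:ℕ) < m)).filter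
              (fun i : Fin d => ¬ ((i:ℕ) < (j:ℕ)+1)), (y i - x i) = 0 := by
            apply Finset.sum_eq_zero
            intro i hi
            simp only [mem_filter, mem_univ, true_and, not_lt] at hi
            have h1 : j < i := by rw [Fin.lt_def]; omega
            have h2 : i < k := by rw [Fin.lt_def]; omega
            rw [hmid i h1 h2]; ring
          rw [he1, he2] at hsplit
          simp only [Finset.sum_sub_distrib] at hsplit hgap
          linarith
    have hsum' : ∑ i, x i = ∑ i, y' i := by
      simp only [hy'def]
      rw [Finset.sum_add_distrib, Finset.sum_add_distrib,
        Finset.sum_ite_eq' univ j (fun _ => -δ), Finset.sum_ite_eq' univ k (fun _ => δ)]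
      simp [hsum]
    have hcard' : (univ.filter fun i => x i ≠ y' i).card ≤ N := by
      have hmem0 : j ∈ univ.filter (fun i => x i ≠ y i) := by
        simp only [mem_filter, mem_univ, true_and]
        exact ne_of_lt hxj
      have hmem0' : k ∈ univ.filter (fun i => x i ≠ y i) := by
        simp only [mem_filter, mem_univ, true_and]
        exact ne_of_gt hyk
      rcases le_total (y j - x j) (x k - y k) with hmin | hmin
      · have hδeq : δ = y j - x j := min_eq_left hmin
        have hsub : (univ.filter fun i => x i ≠ y' i) ⊆
            (univ.filter (fun i => x i ≠ y i)).erase j := by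
          intro i hi
          simp only [mem_filter, mem_univ, true_and] at hi
          rw [mem_erase]
          constructor
          · rintro rfl
            exact hi (by rw [hy'j, hδeq]; ring)
          · simp only [mem_filter, mem_univ, true_and]
            by_cases hik : i = k
            · rw [hik]; exact ne_of_gt hyk
            · by_cases hij : i = j
              · rw [hij]; exact ne_of_lt hxj
              · rw [← hy'o i hij hik]; exact hi
        have := Finset.card_le_card hsub
        rw [Finset.card_erase_of_mem hmem0] at this
        omega
      · have hδeq : δ = x k - y k := min_eq_right hmin
        have hsub : (univ.filter fun i => x i ≠ y' i) ⊆
            (univ.filter (fun i => x i ≠ y i)).erase k := by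
          intro i hi
          simp only [mem_filter, mem_univ, true_and] at hi
          rw [mem_erase]
          constructor
          · rintro rfl
            exact hi (by rw [hy'k, hδeq]; ring)
          · simp only [mem_filter, mem_univ, true_and]
            by_cases hij : i = j
            · rw [hij]; exact ne_of_lt hxj
            · by_cases hik : i = k
              · rw [hik]; exact ne_of_gt hyk
              · rw [← hy'o i hij hik]; exact hi
        have := Finset.card_le_card hsub
        rw [Finset.card_erase_of_mem hmem0'] at this
        omega
    set l : ℝ := δ / (y j - y k) with hldef
    have hyjk0 : (0:ℝ) < y j - y k := by linarith
    have hl0 : 0 ≤ l := div_nonneg hδ.le hyjk0.le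
    have hl1 : l ≤ 1 := (div_le_one hyjk0).mpr (by linarith)
    have hlmul : l * (y j - y k) = δ := div_mul_cancel₀ _ (ne_of_gt hyjk0)
    have hTy : (Tmat (Equiv.swap j k) l).mulVec y = y' := by
      rw [T_mulVec]
      funext a
      by_cases haj : a = j
      · rw [haj, Equiv.swap_apply_left, hy'j]
        ring_nf
        ring_nf at hlmul
        linarith
      · by_cases hak : a = k
        · rw [hak, Equiv.swap_apply_right, hy'k]
          ring_nf
          ring_nf at hlmul
          linarith
        · rw [Equiv.swap_apply_of_ne_of_ne haj hak, hy'o a haj hak]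
          ring
    obtain ⟨D', hD', hxD'⟩ := ih x y' hx hy' hps' hsum' hcard'
    refine ⟨D' * Tmat (Equiv.swap j k) l, ds_mul hD' (ds_T _ hl0 hl1), ?_⟩
    rw [← Matrix.mulVec_mulVec, hTy]
    exact hxD'

/-- if `p ⪯ q` then there is a doubly stochastic matrix `D` with `p = D q`. -/
theorem majorizedBy_exists_doublyStochastic {d : ℕ} (p q : Fin d → ℝ)
    (h : MajorizedBy p q) :
    ∃ D : Matrix (Fin d) (Fin d) ℝ, DoublyStochastic D ∧ p = D.mulVec q := by
  classical
  set ep : Equiv.Perm (Fin d) := Fin.revPerm.trans (Tuple.sort p) with hepdef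
  set eQ : Equiv.Perm (Fin d) := Fin.revPerm.trans (Tuple.sort q) with heQdef
  have hep : ∀ i, sortDesc p i = p (ep i) := fun i => rfl
  have heq : ∀ i, sortDesc q i = q (eQ i) := fun i => rfl
  have hx : Antitone (sortDesc p) := by
    intro a b hab
    exact Tuple.monotone_sort p (show b.rev ≤ a.rev from Fin.rev_le_rev.mpr hab)
  have hy : Antitone (sortDesc q) := by
    intro a b hab
    exact Tuple.monotone_sort q (show b.rev ≤ a.rev from Fin.rev_le_rev.mpr hab)
  have hsump : ∑ i, sortDesc p i = ∑ i, p i := by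
    calc ∑ i, sortDesc p i = ∑ i, p (ep i) := by simp only [hep]
      _ = ∑ i, p i := Equiv.sum_comp ep p
  have hsumq : ∑ i, sortDesc q i = ∑ i, q i := by
    calc ∑ i, sortDesc q i = ∑ i, q (eQ i) := by simp only [heq]
      _ = ∑ i, q i := Equiv.sum_comp eQ q
  have hsum : ∑ i, sortDesc p i = ∑ i, sortDesc q i := by
    rw [hsump, hsumq]; exact h.2
  obtain ⟨D', hD', hxD'⟩ := key ((univ.filter
      (fun i => sortDesc p i ≠ sortDesc q i)).card) (sortDesc p) (sortDesc q)
    hx hy (fun m => h.1 m) hsum (le_refl _)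
  refine ⟨Matrix.of (fun i m => D' (ep.symm i) (eQ.symm m)), ⟨?_, ?_, ?_⟩, ?_⟩
  · intro i m; exact hD'.1 _ _
  · intro i
    calc ∑ m, D' (ep.symm i) (eQ.symm m) = ∑ m, D' (ep.symm i) m :=
          Equiv.sum_comp eQ.symm (fun m => D' (ep.symm i) m)
      _ = 1 := hD'.2.1 _
  · intro m
    calc ∑ i, D' (ep.symm i) (eQ.symm m) = ∑ i, D' i (eQ.symm m) :=
          Equiv.sum_comp ep.symm (fun i => D' i (eQ.symm m))
      _ = 1 := hD'.2.2 _
  · funext i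
    have step : ∀ c : Fin d, ∑ m, D' c (eQ.symm m) * q m = ∑ b, D' c b * sortDesc q b := by
      intro c
      rw [← Equiv.sum_comp eQ (fun m => D' c (eQ.symm m) * q m)]
      apply Finset.sum_congr rfl
      intro b _
      rw [Equiv.symm_apply_apply, heq]
    calc p i = sortDesc p (ep.symm i) := by rw [hep, Equiv.apply_symm_apply]
      _ = ∑ b, D' (ep.symm i) b * sortDesc q b := by
          rw [hxD']; rfl
      _ = ∑ m, D' (ep.symm i) (eQ.symm m) * q m := (step _).symm
      _ = Matrix.mulVec (Matrix.of (fun i m => D' (ep.symm i) (eQ.symm m))) q i := rfl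
end

section
/- Tensoring preserves majorization on the appropriate factor: if p ⪯ p' are probability vectors of dimension d and q is any probability vector of dimension e, then p ⊗ q ⪯ p' ⊗ q. -/
open Finset Kronecker ComplexOrder

/-! `partialSum p k` is the largest sum of `p` over a set of `min k n` indices. A set `S` of
indices of `p ⊗ q` splits into its sections `S_j = {i | (i, j) ∈ S}`; as `q ≥ 0`, the mass of
`p ⊗ q` on `S` is at most `∑ j, q j * partialSum p' #S_j`, and taking for each `j` a set of
`#S_j` largest entries of `p'` gives a set of the size of `S` carrying exactly that mass of
`p' ⊗ q`. -/

theorem Finset.sum_le_sum_of_card_eq_of_forall_sdiff_le {ι M : Type*} [DecidableEq ι]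
    [AddCommMonoid M] [LinearOrder M] [IsOrderedAddMonoid M] {s t : Finset ι} {f : ι → M}
    (hst : #s = #t) (h : ∀ a ∈ s \ t, ∀ b ∈ t \ s, f a ≤ f b) :
    ∑ i ∈ s, f i ≤ ∑ i ∈ t, f i := by
  have hcard : #(s \ t) = #(t \ s) := card_sdiff_comm hst
  have hsdiff : ∑ i ∈ s \ t, f i ≤ ∑ i ∈ t \ s, f i := by
    rcases (s \ t).eq_empty_or_nonempty with hempty | hne
    · rw [hempty, card_empty, eq_comm, card_eq_zero] at hcard
      simp [hempty, hcard]
    obtain ⟨a, ha, hmax⟩ := exists_max_image (s \ t) f hne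
    calc ∑ i ∈ s \ t, f i ≤ #(s \ t) • f a := sum_le_card_nsmul _ _ _ hmax
      _ = #(t \ s) • f a := by rw [hcard]
      _ ≤ ∑ i ∈ t \ s, f i := card_nsmul_le_sum _ _ _ fun b hb => h a ha b hb
  rw [← sum_inter_add_sum_sdiff s t, ← sum_inter_add_sum_sdiff t s, inter_comm]
  exact add_le_add_right hsdiff _

lemma sortDesc_eq_comp_perm {n : ℕ} (p : Fin n → ℝ) :
    ∃ σ : Equiv.Perm (Fin n), sortDesc p = p ∘ σ :=
  ⟨Fin.revPerm.trans (Tuple.sort p), rfl⟩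

lemma antitone_sortDesc {n : ℕ} (p : Fin n → ℝ) : Antitone (sortDesc p) :=
  fun _ _ hij => Tuple.monotone_sort p (Fin.rev_le_rev.mpr hij)

lemma partialSum_min {n : ℕ} (p : Fin n → ℝ) (k : ℕ) :
    partialSum p (min k n) = partialSum p k := by
  unfold partialSum
  congr 1
  ext i
  simp

lemma sum_le_partialSum {n : ℕ} (p : Fin n → ℝ) (S : Finset (Fin n)) :
    ∑ i ∈ S, p i ≤ partialSum p #S := by
  obtain ⟨σ, hσ⟩ := sortDesc_eq_comp_perm p
  have hS : ∑ i ∈ S, p i = ∑ i ∈ S.map σ.symm.toEmbedding, sortDesc p i := by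
    simp [hσ]
  rw [hS, partialSum]
  apply sum_le_sum_of_card_eq_of_forall_sdiff_le
  · rw [card_map, Fin.card_filter_val_lt, min_eq_right (card_finset_fin_le S)]
  · intro a ha b hb
    simp only [mem_sdiff, mem_filter, mem_univ, true_and] at ha hb
    exact antitone_sortDesc p (Fin.le_def.mpr (by omega))

lemma exists_sum_eq_partialSum {n : ℕ} (p : Fin n → ℝ) (k : ℕ) :
    ∃ S : Finset (Fin n), #S = min k n ∧ ∑ i ∈ S, p i = partialSum p k := by
  obtain ⟨σ, hσ⟩ := sortDesc_eq_comp_perm p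
  refine ⟨(univ.filter fun i : Fin n => (i : ℕ) < k).map σ.toEmbedding, ?_, ?_⟩
  · rw [card_map, Fin.card_filter_val_lt, min_comm]
  · simp [partialSum, hσ]

section Sections

variable {α β M : Type*} [Fintype α] [Fintype β] [DecidableEq α] [DecidableEq β]

lemma Finset.sum_eq_sum_sections [AddCommMonoid M] (S : Finset (α × β)) (f : α → β → M) :
    ∑ x ∈ S, f x.1 x.2 = ∑ j, ∑ i ∈ {i | (i, j) ∈ S}, f i j :=
  sum_finset_product_right' S univ _ (by simp)

lemma Finset.card_eq_sum_card_sections (S : Finset (α × β)) :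
    #S = ∑ j, #{i | (i, j) ∈ S} := by
  simpa only [card_eq_sum_ones] using S.sum_eq_sum_sections fun _ _ => 1

end Sections

section Tensor

variable {d : ℕ} {β : Type*} [Fintype β] [DecidableEq β] (p p' : Fin d → ℝ) (q : β → ℝ)

lemma sum_mul_le_sum_mul_partialSum (hq : ∀ j, 0 ≤ q j)
    (hmaj : ∀ k, partialSum p k ≤ partialSum p' k) (S : Finset (Fin d × β)) :
    ∑ x ∈ S, p x.1 * q x.2 ≤ ∑ j, q j * partialSum p' #{i | (i, j) ∈ S} := by
  rw [S.sum_eq_sum_sections fun i j => p i * q j]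
  refine sum_le_sum fun j _ => ?_
  rw [← sum_mul, mul_comm]
  exact mul_le_mul_of_nonneg_left ((sum_le_partialSum p _).trans (hmaj _)) (hq j)

lemma exists_sum_mul_eq_sum_mul_partialSum (c : β → ℕ) :
    ∃ U : Finset (Fin d × β), #U = ∑ j, min (c j) d ∧
      ∑ x ∈ U, p x.1 * q x.2 = ∑ j, q j * partialSum p (c j) := by
  choose B hBcard hBsum using fun j => exists_sum_eq_partialSum p (c j)
  set U : Finset (Fin d × β) := {x | x.1 ∈ B x.2}
  have hsection : ∀ j, ({i | (i, j) ∈ U} : Finset (Fin d)) = B j := fun j => by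
    ext
    simp [U]
  refine ⟨U, ?_, ?_⟩
  · simp only [card_eq_sum_card_sections, hsection, hBcard]
  · simp only [U.sum_eq_sum_sections fun i j => p i * q j, hsection, ← hBsum, mul_sum,
      mul_comm]

lemma exists_card_eq_sum_mul_le (hq : ∀ j, 0 ≤ q j)
    (hmaj : ∀ k, partialSum p k ≤ partialSum p' k) (S : Finset (Fin d × β)) :
    ∃ U : Finset (Fin d × β), #U = #S ∧ ∑ x ∈ S, p x.1 * q x.2 ≤ ∑ x ∈ U, p' x.1 * q x.2 := by
  obtain ⟨U, hUcard, hUsum⟩ :=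
    exists_sum_mul_eq_sum_mul_partialSum p' q fun j => #{i | (i, j) ∈ S}
  refine ⟨U, ?_, hUsum ▸ sum_mul_le_sum_mul_partialSum p p' q hq hmaj S⟩
  simp only [hUcard, card_eq_sum_card_sections S, min_eq_left (card_finset_fin_le _)]

end Tensor

lemma sum_map_finProdFinEquiv_tensorVec {d e : ℕ} (p : Fin d → ℝ) (q : Fin e → ℝ)
    (S : Finset (Fin d × Fin e)) :
    ∑ k ∈ S.map finProdFinEquiv.toEmbedding, tensorVec p q k = ∑ x ∈ S, p x.1 * q x.2 := by
  simp only [sum_map, tensorVec, Equiv.coe_toEmbedding, Equiv.symm_apply_apply]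

lemma exists_card_eq_sum_tensorVec_le {d e : ℕ} (p p' : Fin d → ℝ) (q : Fin e → ℝ)
    (hq : ∀ j, 0 ≤ q j) (hmaj : ∀ k, partialSum p k ≤ partialSum p' k)
    (S : Finset (Fin (d * e))) :
    ∃ U : Finset (Fin (d * e)), #U = #S ∧
      ∑ k ∈ S, tensorVec p q k ≤ ∑ k ∈ U, tensorVec p' q k := by
  set T := S.map finProdFinEquiv.symm.toEmbedding
  have hS : S = T.map finProdFinEquiv.toEmbedding := by simp [T, map_map]
  obtain ⟨U, hUcard, hle⟩ := exists_card_eq_sum_mul_le p p' q hq hmaj T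
  refine ⟨U.map finProdFinEquiv.toEmbedding, by rw [card_map, hUcard, card_map], ?_⟩
  rwa [hS, sum_map_finProdFinEquiv_tensorVec, sum_map_finProdFinEquiv_tensorVec]

lemma sum_tensorVec {d e : ℕ} (p : Fin d → ℝ) (q : Fin e → ℝ) :
    ∑ k, tensorVec p q k = (∑ i, p i) * ∑ j, q j := by
  rw [← map_univ_equiv finProdFinEquiv, sum_map_finProdFinEquiv_tensorVec, Fintype.sum_prod_type,
    sum_mul_sum]

theorem tensor_preserves_majorization_general {d e : ℕ} (p p' : Fin d → ℝ) (q : Fin e → ℝ)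
    (hq : IsProbVec q)
    (h : MajorizedBy p p') :
    MajorizedBy (tensorVec p q) (tensorVec p' q) := by
  refine ⟨fun k => ?_, by rw [sum_tensorVec, sum_tensorVec, h.2]⟩
  obtain ⟨S, hScard, hS⟩ := exists_sum_eq_partialSum (tensorVec p q) k
  obtain ⟨U, hUcard, hle⟩ := exists_card_eq_sum_tensorVec_le p p' q hq.1 h.1 S
  calc partialSum (tensorVec p q) k = ∑ i ∈ S, tensorVec p q i := hS.symm
    _ ≤ ∑ i ∈ U, tensorVec p' q i := hle
    _ ≤ partialSum (tensorVec p' q) #U := sum_le_partialSum _ U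
    _ = partialSum (tensorVec p' q) k := by rw [hUcard, hScard, partialSum_min]

/-- tensoring with a fixed probability vector preserves majorization. -/
theorem tensor_preserves_majorization {d e : ℕ} (p p' : Fin d → ℝ) (q : Fin e → ℝ)
    (hp : IsProbVec p) (hp' : IsProbVec p') (hq : IsProbVec q)
    (h : MajorizedBy p p') :
    MajorizedBy (tensorVec p q) (tensorVec p' q) :=
  tensor_preserves_majorization_general p p' q hq h
end

section
/- Steering criterion from a universal uncertainty relation: Let Ω satisfy Ω(∑_λ t_λ v_λ) ≥ ∑_λ t_λ Ω(v_λ) for convex combinations of probability vectors, and suppose ∑_{i=1}^m Ω(p_{x_i}(σ)) ≥ Ω(ω_x) for all states σ on H_B. If an assemblage {σ_{a'|x'_i}} admits a local hidden state model σ_{a'|x'_i} = ∑_λ p(λ) p(a'|x'_i, λ) σ_λ, then ∑_{i=1}^m ∑_{a'} p(a'|x'_i) Ω(p_{x_i | x'_i = a'}) ≥ Ω(ω_x), where p_{x_i|x'_i=a'} is the normalized conditional outcome distribution of measuring x_i on σ_{a'|x'_i}/p(a'|x'_i). -/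
open Finset Kronecker ComplexOrder

/-- steering criterion from a universal uncertainty relation. -/
theorem steering_criterion_universal_UR {dB d m k N L : ℕ}
    (Omega : (n : ℕ) → (Fin n → ℝ) → ℝ)
    -- probabilistic mixing does not decrease uncertainty
    (hmix : ∀ (n M : ℕ) (t : Fin M → ℝ) (v : Fin M → Fin n → ℝ),
      (∀ l, 0 ≤ t l) → (∑ l, t l = 1) →
      ∑ l, t l * Omega n (v l) ≤ Omega n (fun j => ∑ l, t l * v l j))
    -- Bob's measurements and their universal uncertainty relation
    (F : Fin m → Fin d → Matrix (Fin dB) (Fin dB) ℂ)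
    (hF : ∀ i, IsPOVM (F i))
    (ω : Fin N → ℝ)
    (hUR : ∀ σ : Matrix (Fin dB) (Fin dB) ℂ, IsDensityMatrix σ →
      Omega N ω ≤ ∑ i, Omega d (outDist (F i) σ))
    -- the assemblage steered by Alice's measurements `x'_i`
    (σA : Fin m → Fin k → Matrix (Fin dB) (Fin dB) ℂ)
    (hpos : ∀ i a', (σA i a').PosSemidef)
    -- `p(a'|x'_i)`
    (pA : Fin m → Fin k → ℝ)
    (hpA : ∀ i a', pA i a' = (Matrix.trace (σA i a')).re)
    -- local hidden state model
    (pl : Fin L → ℝ) (hpl : ∀ l, 0 ≤ pl l) (hpl1 : ∑ l, pl l = 1)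
    (pc : Fin m → Fin L → Fin k → ℝ)
    (hpc : ∀ i l a', 0 ≤ pc i l a') (hpc1 : ∀ i l, ∑ a', pc i l a' = 1)
    (σl : Fin L → Matrix (Fin dB) (Fin dB) ℂ) (hσl : ∀ l, IsDensityMatrix (σl l))
    (hLHS : ∀ i a', σA i a' = ∑ l, (pl l * pc i l a') • σl l) :
    Omega N ω ≤ ∑ i, ∑ a', pA i a' *
      Omega d (fun j => (Matrix.trace (F i j * σA i a')).re / pA i a') := by
  -- trace linearity facts
  have htr : ∀ i a' (j : Fin d), (Matrix.trace (F i j * σA i a')).re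
      = ∑ l, pl l * pc i l a' * (Matrix.trace (F i j * σl l)).re := by
    intro i a' j
    rw [hLHS, Finset.mul_sum, Matrix.trace_sum, Complex.re_sum]
    refine Finset.sum_congr rfl fun l _ => ?_
    rw [mul_smul_comm, Matrix.trace_smul, Complex.real_smul]
    simp [Complex.mul_re]
  have hpAeq : ∀ i a', pA i a' = ∑ l, pl l * pc i l a' := by
    intro i a'
    rw [hpA, hLHS, Matrix.trace_sum, Complex.re_sum]
    refine Finset.sum_congr rfl fun l _ => ?_
    rw [Matrix.trace_smul, (hσl l).2, Complex.real_smul]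
    simp
  have key : ∀ i a', ∑ l, pl l * pc i l a' * Omega d (outDist (F i) (σl l))
      ≤ pA i a' * Omega d (fun j => (Matrix.trace (F i j * σA i a')).re / pA i a') := by
    intro i a'
    rcases eq_or_lt_of_le (by
      rw [hpAeq]
      exact Finset.sum_nonneg fun l _ => mul_nonneg (hpl l) (hpc i l a')
      : (0:ℝ) ≤ pA i a') with h0 | h0
    · have hall : ∀ l ∈ Finset.univ, pl l * pc i l a' = 0 := by
        have := (hpAeq i a').symm.trans h0.symm
        exact (Finset.sum_eq_zero_iff_of_nonneg
          (fun l _ => mul_nonneg (hpl l) (hpc i l a'))).mp this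
      rw [← h0, zero_mul]
      refine le_of_eq (Finset.sum_eq_zero fun l _ => ?_)
      rw [hall l (Finset.mem_univ l), zero_mul]
    · set t : Fin L → ℝ := fun l => pl l * pc i l a' / pA i a' with ht
      have htnn : ∀ l, 0 ≤ t l := fun l =>
        div_nonneg (mul_nonneg (hpl l) (hpc i l a')) h0.le
      have htsum : ∑ l, t l = 1 := by
        rw [← Finset.sum_div, ← hpAeq, div_self h0.ne']
      have hm := hmix d L t (fun l => outDist (F i) (σl l)) htnn htsum
      have heq : (fun j => ∑ l, t l * outDist (F i) (σl l) j)
          = (fun j => (Matrix.trace (F i j * σA i a')).re / pA i a') := by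
        funext j
        rw [htr, Finset.sum_div]
        refine Finset.sum_congr rfl fun l _ => ?_
        rw [ht]
        simp only [outDist]
        ring
      rw [heq] at hm
      calc ∑ l, pl l * pc i l a' * Omega d (outDist (F i) (σl l))
          = pA i a' * ∑ l, t l * Omega d (outDist (F i) (σl l)) := by
            rw [Finset.mul_sum]
            refine Finset.sum_congr rfl fun l _ => ?_
            rw [ht]; field_simp
        _ ≤ _ := by
            exact mul_le_mul_of_nonneg_left hm h0.le
  calc Omega N ω = ∑ l, pl l * Omega N ω := by
        rw [← Finset.sum_mul, hpl1, one_mul]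
    _ ≤ ∑ l, pl l * ∑ i, Omega d (outDist (F i) (σl l)) := by
        refine Finset.sum_le_sum fun l _ => ?_
        exact mul_le_mul_of_nonneg_left (hUR (σl l) (hσl l)) (hpl l)
    _ = ∑ i, ∑ a', ∑ l, pl l * pc i l a' * Omega d (outDist (F i) (σl l)) := by
        simp_rw [Finset.mul_sum]
        rw [Finset.sum_comm]
        refine Finset.sum_congr rfl fun i _ => ?_
        rw [Finset.sum_comm]
        refine Finset.sum_congr rfl fun l _ => ?_
        rw [← Finset.sum_mul, ← Finset.mul_sum, hpc1, mul_one]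
    _ ≤ _ := Finset.sum_le_sum fun i _ => Finset.sum_le_sum fun a' _ => key i a'
end
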